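/- Let H be a real Hilbert space and let D : H → H' be a bounded linear operator into the dual such that ⟨Dφ, φ⟩ ≥ 0 for all φ ∈ H. Suppose there is a compact linear operator C : H → H' with ⟨(D + C)φ, φ⟩ ≥ c‖φ‖² for some c > 0 and all φ ∈ H, and suppose additionally that ⟨Dφ, φ⟩ = 0 implies φ = 0. Then there exists a constant c' > 0 such that ⟨Dφ, φ⟩ ≥ c'‖φ‖² for all φ ∈ H. -/

import Mathlib

/-!
If `D` were not coercive, there would be unit vectors `u` with `⟨D u, u⟩ → 0` along some
ultrafilter. Along it `u` converges weakly to some `x` (Banach–Alaoglu and Riesz) and `C u`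
converges in norm (compactness of `C`). Weak lower semicontinuity of the nonnegative form gives
`⟨D x, x⟩ ≤ 0`, so `x = 0` by definiteness; then `⟨C u, u⟩ → 0` as well, and the Gårding
inequality `c ≤ ⟨D u, u⟩ + ⟨C u, u⟩` forces `c ≤ 0`.
-/

open Filter Topology Metric InnerProductSpace

section Normed

variable {𝕜 E F ι : Type*} [NontriviallyNormedField 𝕜] [NormedAddCommGroup E] [NormedSpace 𝕜 E]
  [NormedAddCommGroup F] [NormedSpace 𝕜 F]

theorem IsCompactOperator.exists_tendsto_of_norm_le {T : E →L[𝕜] F} (hT : IsCompactOperator T)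
    (U : Ultrafilter ι) {u : ι → E} {R : ℝ} (hu : ∀ i, ‖u i‖ ≤ R) :
    ∃ ψ, Tendsto (fun i => T (u i)) U (𝓝 ψ) := by
  obtain ⟨K, hK, hTK⟩ := hT.image_closedBall_subset_compact (f := (T : E →ₗ[𝕜] F)) R
  have hmem : ∀ i, T (u i) ∈ K := fun i => hTK ⟨u i, mem_closedBall_zero_iff.2 (hu i), rfl⟩
  obtain ⟨ψ, -, hψ⟩ := hK.ultrafilter_le_nhds (U.map fun i => T (u i))
    (le_principal_iff.2 (mem_map.2 (univ_mem' hmem)))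
  exact ⟨ψ, hψ⟩

theorem tendsto_apply_apply_of_tendsto {l : Filter ι} {g : ι → E →L[𝕜] F} {ψ : E →L[𝕜] F}
    (hg : Tendsto g l (𝓝 ψ)) {u : ι → E} {R : ℝ} (hu : ∀ i, ‖u i‖ ≤ R) {x : E}
    (hψ : Tendsto (fun i => ψ (u i)) l (𝓝 (ψ x))) :
    Tendsto (fun i => g i (u i)) l (𝓝 (ψ x)) := by
  have hrem : Tendsto (fun i => (g i - ψ) (u i)) l (𝓝 0) := by
    refine squeeze_zero_norm (fun i => ?_)
      (by simpa using (tendsto_iff_norm_sub_tendsto_zero.1 hg).mul_const R)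
    exact ((g i - ψ).le_opNorm (u i)).trans (by gcongr; exact hu i)
  simpa using hrem.add hψ

end Normed

section Real

variable {E ι : Type*} [NormedAddCommGroup E] [NormedSpace ℝ E]

theorem neBot_comap_apply_self_sphere_of_not_coercive {D : E →L[ℝ] StrongDual ℝ E}
    (hpos : ∀ φ, 0 ≤ D φ φ) (hD : ¬ ∃ c > 0, ∀ φ, c * ‖φ‖ ^ 2 ≤ D φ φ) :
    (comap (fun u : sphere (0 : E) 1 => D u u) (𝓝 0)).NeBot := by
  refine comap_neBot_iff.2 fun t ht => ?_
  obtain ⟨ε, hε, hεt⟩ := Metric.mem_nhds_iff.1 ht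
  push Not at hD
  obtain ⟨φ, hφ⟩ := hD ε hε
  have hφ0 : 0 < ‖φ‖ := norm_pos_iff.2 (by rintro rfl; simp at hφ)
  refine ⟨⟨‖φ‖⁻¹ • φ, by simp [norm_smul, hφ0.ne']⟩, hεt ?_⟩
  have hscale : D (‖φ‖⁻¹ • φ) (‖φ‖⁻¹ • φ) = D φ φ / ‖φ‖ ^ 2 := by
    simp only [map_smul, smul_apply, smul_eq_mul]
    field_simp
  rw [mem_ball_zero_iff, Real.norm_eq_abs, abs_of_nonneg (hpos _), hscale,
    div_lt_iff₀ (by positivity)]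
  exact hφ

theorem apply_self_le_of_tendsto {D : E →L[ℝ] StrongDual ℝ E} (hpos : ∀ φ, 0 ≤ D φ φ)
    {l : Filter ι} [l.NeBot] {u : ι → E} {x : E}
    (hux : ∀ f : StrongDual ℝ E, Tendsto (fun i => f (u i)) l (𝓝 (f x)))
    {a : ℝ} (ha : Tendsto (fun i => D (u i) (u i)) l (𝓝 a)) : D x x ≤ a := by
  have hexpand : ∀ i, 0 ≤ D (u i) (u i) - D.flip x (u i) - D x (u i) + D x x := fun i => by
    have := hpos (u i - x)
    simp only [map_sub, sub_apply, ContinuousLinearMap.flip_apply] at this ⊢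
    linarith
  have hlim := ((ha.sub (hux (D.flip x))).sub (hux (D x))).add_const (D x x)
  have := ge_of_tendsto' hlim hexpand
  simp only [ContinuousLinearMap.flip_apply] at this
  linarith

end Real

theorem exists_forall_tendsto_apply_of_norm_le {H ι : Type*} [NormedAddCommGroup H]
    [InnerProductSpace ℝ H] [CompleteSpace H] (U : Ultrafilter ι) {u : ι → H} {R : ℝ}
    (hu : ∀ i, ‖u i‖ ≤ R) :
    ∃ x : H, ∀ f : StrongDual ℝ H, Tendsto (fun i => f (u i)) U (𝓝 (f x)) := by
  let w : ι → WeakDual ℝ H := fun i => StrongDual.toWeakDual (toDual ℝ H (u i))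
  have hw : ∀ i, w i ∈ WeakDual.toStrongDual ⁻¹' closedBall 0 R := fun i => by
    simpa [w] using hu i
  obtain ⟨x', -, hx'⟩ := (WeakDual.isCompact_closedBall 0 R).ultrafilter_le_nhds (U.map w)
    (le_principal_iff.2 (mem_map.2 (univ_mem' hw)))
  obtain ⟨x, hx⟩ := (toDual ℝ H).surjective (WeakDual.toStrongDual x')
  refine ⟨x, fun f => ?_⟩
  have hpair : ∀ v : H, f v = toDual ℝ H v ((toDual ℝ H).symm f) := fun v => by
    rw [toDual_apply_apply, real_inner_comm, toDual_symm_apply]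
  simp only [hpair]
  rw [hx]
  exact tendsto_iff_forall_eval_tendsto_topDualPairing.1 hx' ((toDual ℝ H).symm f)

/-- A nonnegative operator satisfying a Gårding inequality (coercive modulo a
compact perturbation) that is strictly positive definite is coercive. -/
theorem stmt_2 {H : Type*} [NormedAddCommGroup H] [InnerProductSpace ℝ H]
    [CompleteSpace H]
    (D C : H →L[ℝ] StrongDual ℝ H) (hC : IsCompactOperator C)
    (c : ℝ) (hc : 0 < c)
    (hpos : ∀ φ : H, 0 ≤ D φ φ)
    (hGarding : ∀ φ : H, c * ‖φ‖ ^ 2 ≤ (D + C) φ φ)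
    (hdef : ∀ φ : H, D φ φ = 0 → φ = 0) :
    ∃ c' > 0, ∀ φ : H, c' * ‖φ‖ ^ 2 ≤ D φ φ := by
  by_contra hD
  have := neBot_comap_apply_self_sphere_of_not_coercive hpos hD
  let U := Ultrafilter.of (comap (fun u : sphere (0 : H) 1 => D u u) (𝓝 0))
  have hDuu : Tendsto (fun u : sphere (0 : H) 1 => D u u) U (𝓝 0) :=
    tendsto_comap.mono_left (Ultrafilter.of_le _)
  have hunit (u : sphere (0 : H) 1) : ‖(u : H)‖ = 1 := norm_eq_of_mem_sphere u
  have hle (u : sphere (0 : H) 1) : ‖(u : H)‖ ≤ 1 := (hunit u).le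
  obtain ⟨x, hx⟩ := exists_forall_tendsto_apply_of_norm_le U hle
  obtain ⟨ψ, hψ⟩ := hC.exists_tendsto_of_norm_le U hle
  have hx0 : x = 0 := hdef x ((apply_self_le_of_tendsto hpos hx hDuu).antisymm (hpos x))
  have hCuu : Tendsto (fun u : sphere (0 : H) 1 => C u u) U (𝓝 0) := by
    simpa [hx0] using tendsto_apply_apply_of_tendsto hψ hle (hx ψ)
  have hc0 : c ≤ 0 + 0 := ge_of_tendsto' (hDuu.add hCuu) fun u => by
    simpa [hunit u] using hGarding u
  linarith
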